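/- arXiv:2310.20333 — 2 statements merged into one kernel-verified Lean document; each statement's English description precedes it below -/
import Mathlib

section
/- Consider a zero-sum semidefinite network game with payoff operators Φ_{ij} and Φ_i(X) = Σ_{j ∈ N(i)} Φ_{ij}(X_j). A profile X of density matrices is a Nash equilibrium if and only if there exists w ∈ ℝ^N such that Φ_i(X) ⪯ w_i I_{n_i} for all i ∈ [N] and Σ_{i=1}^N w_i = 0. In particular, the set of Nash equilibria equals the coordinate projection onto the X-coordinates of the set of optimal solutions of the semidefinite program minimizing Σ_i w_i subject to Φ_i(X) ⪯ w_i I_{n_i}, tr(X_i) = 1, X_i ⪰ 0 for all i. -/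
open Matrix Kronecker BigOperators ComplexOrder

noncomputable section

/-- Frobenius inner product `⟨A, B⟩ = tr(Aᴴ B)`. -/
def frob {α : Type*} [Fintype α] (A B : Matrix α α ℂ) : ℂ := (Aᴴ * B).trace

/-- A density matrix: positive semidefinite with trace one. -/
def IsDensity {α : Type*} [Fintype α] (X : Matrix α α ℂ) : Prop :=
  X.PosSemidef ∧ X.trace = 1

/-- The payoff operator `Φ_R` associated with a payoff matrix `R`,
defined entrywise by `Φ_R(T)_{a,b} = Σ_{c,d} R_{(a,c),(b,d)} T_{d,c}`. -/
def payoffOp {k m : ℕ} (R : Matrix (Fin k × Fin m) (Fin k × Fin m) ℂ)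
    (T : Matrix (Fin m) (Fin m) ℂ) : Matrix (Fin k) (Fin k) ℂ :=
  Matrix.of fun a b => ∑ c, ∑ d, R (a, c) (b, d) * T d c

/-- The payoff of player `i`: `p_i(X) = Σ_{j ∈ N(i)} ⟨R_{ij}, X_i ⊗ X_j⟩` (a real number). -/
def payoff {N : ℕ} (G : SimpleGraph (Fin N)) [DecidableRel G.Adj] (n : Fin N → ℕ)
    (R : ∀ i j : Fin N, Matrix (Fin (n i) × Fin (n j)) (Fin (n i) × Fin (n j)) ℂ)
    (X : ∀ i, Matrix (Fin (n i)) (Fin (n i)) ℂ) (i : Fin N) : ℝ :=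
  (∑ j ∈ G.neighborFinset i, frob (R i j) ((X i) ⊗ₖ (X j))).re

/-- `Φ_i(X) = Σ_{j ∈ N(i)} Φ_{ij}(X_j)`. -/
def Phi {N : ℕ} (G : SimpleGraph (Fin N)) [DecidableRel G.Adj] (n : Fin N → ℕ)
    (R : ∀ i j : Fin N, Matrix (Fin (n i) × Fin (n j)) (Fin (n i) × Fin (n j)) ℂ)
    (X : ∀ i, Matrix (Fin (n i)) (Fin (n i)) ℂ) (i : Fin N) :
    Matrix (Fin (n i)) (Fin (n i)) ℂ :=
  ∑ j ∈ G.neighborFinset i, payoffOp (R i j) (X j)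

/-- Nash equilibrium (best-response) condition for a strategy profile. -/
def IsNash {N : ℕ} (G : SimpleGraph (Fin N)) [DecidableRel G.Adj] (n : Fin N → ℕ)
    (R : ∀ i j : Fin N, Matrix (Fin (n i) × Fin (n j)) (Fin (n i) × Fin (n j)) ℂ)
    (X : ∀ i, Matrix (Fin (n i)) (Fin (n i)) ℂ) : Prop :=
  ∀ i, ∀ S : Matrix (Fin (n i)) (Fin (n i)) ℂ, IsDensity S →
    payoff G n R (Function.update X i S) i ≤ payoff G n R X i

/-- The largest eigenvalue of a Hermitian matrix (junk value `0` otherwise). -/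
def lamMax {k : ℕ} (A : Matrix (Fin k) (Fin k) ℂ) : ℝ :=
  if h : A.IsHermitian then ⨆ i, h.eigenvalues i else 0

/-!
Testing a Hermitian matrix `A` against rank-one density matrices shows that
`Re tr(S A) ≤ w` for all density matrices `S` iff `A ⪯ w I`. Hence `(w, X)` is feasible iff no
player can gain more than `w_i` by deviating from `X`; in particular `w_i ≥ p_i(X)`, so
`Σ w_i ≥ Σ p_i(X) = 0`, and equality forces `w_i = p_i(X)` for every `i`, which is the Nash
condition.

For the SDP statement the optimal value must be `0`, i.e. a Nash equilibrium must exist. The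
form `F(X, Y) = Σ_i p_i(Y_i, X_{-i})` is bilinear, and it vanishes on the diagonal of the compact
convex set of profiles because the game is zero-sum, so it is skew there; `X` is a Nash
equilibrium iff `F(X, ·) ≤ 0` on profiles. If there were none, finitely many open sets
`{X | F(X, Y_k) > 0}` would cover the profiles. The skew-symmetric matrix game
`(F(Y_k, Y_j))_{j,k}` has a mixed strategy `λ` with nonpositive payoff against every pure
strategy (Farkas), and `Σ_k λ_k Y_k` lies in none of the covering sets.
-/

theorem Matrix.trace_vecMulVec_mul {ι R : Type*} [Fintype ι] [CommSemiring R] (x y : ι → R)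
    (A : Matrix ι ι R) : (vecMulVec x y * A).trace = y ⬝ᵥ A *ᵥ x := by
  rw [vecMulVec_mul, trace_vecMulVec, dotProduct_comm, dotProduct_mulVec]

theorem Matrix.PosSemidef.trace_mul_nonneg {ι 𝕜 : Type*} [Fintype ι] [RCLike 𝕜]
    {S P : Matrix ι ι 𝕜} (hS : S.PosSemidef) (hP : P.PosSemidef) : 0 ≤ (S * P).trace := by
  obtain ⟨m, v, rfl⟩ := posSemidef_iff_eq_sum_vecMulVec.mp hS
  rw [Finset.sum_mul, trace_sum]
  exact Finset.sum_nonneg fun i _ =>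
    (trace_vecMulVec_mul _ _ P).symm ▸ hP.dotProduct_mulVec_nonneg _

theorem IsDensity.re_trace_mul_le {ι : Type*} [Fintype ι] [DecidableEq ι] {S A : Matrix ι ι ℂ}
    (hS : IsDensity S) {w : ℝ} (hA : ((w : ℂ) • (1 : Matrix ι ι ℂ) - A).PosSemidef) :
    (S * A).trace.re ≤ w := by
  have := Complex.le_def.mp (hS.1.trace_mul_nonneg hA) |>.1
  rw [mul_sub, mul_smul_comm, mul_one, trace_sub, trace_smul, hS.2] at this
  simpa using this

theorem posSemidef_smul_one_sub_iff_forall_isDensity {ι : Type*} [Fintype ι] [DecidableEq ι]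
    {A : Matrix ι ι ℂ} (hA : A.IsHermitian) {w : ℝ} :
    ((w : ℂ) • (1 : Matrix ι ι ℂ) - A).PosSemidef ↔ ∀ S, IsDensity S → (S * A).trace.re ≤ w := by
  refine ⟨fun hw S hS => hS.re_trace_mul_le hw, fun h => ?_⟩
  have hHerm : ((w : ℂ) • (1 : Matrix ι ι ℂ) - A).IsHermitian :=
    (isHermitian_one.smul (Complex.conj_ofReal w)).sub hA
  refine PosSemidef.of_dotProduct_mulVec_nonneg hHerm fun x => ?_
  rcases eq_or_ne x 0 with rfl | hx
  · simp
  set t : ℝ := (star x ⬝ᵥ x).re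
  have hd : star x ⬝ᵥ x = t :=
    Complex.ext rfl (Complex.nonneg_iff.mp (dotProduct_star_self_nonneg x)).2.symm
  have ht : 0 < t := (Complex.pos_iff.mp (dotProduct_star_self_pos_iff.mpr hx)).1
  have hS : IsDensity (((t⁻¹ : ℝ) : ℂ) • vecMulVec x (star x)) := by
    refine ⟨(posSemidef_vecMulVec_self_star x).smul
      (Complex.zero_le_real.mpr (inv_nonneg.mpr ht.le)), ?_⟩
    rw [trace_smul, trace_vecMulVec, dotProduct_comm, hd, smul_eq_mul, ← Complex.ofReal_mul,
      inv_mul_cancel₀ ht.ne', Complex.ofReal_one]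
  have hq := h _ hS
  rw [smul_mul_assoc, trace_smul, trace_vecMulVec_mul, smul_eq_mul, Complex.re_ofReal_mul,
    inv_mul_le_iff₀ ht] at hq
  refine Complex.nonneg_iff.mpr ⟨?_, (hHerm.im_star_dotProduct_mulVec_self x).symm⟩
  rw [sub_mulVec, smul_mulVec, one_mulVec, dotProduct_sub, dotProduct_smul, hd]
  simp only [smul_eq_mul, Complex.sub_re, Complex.re_ofReal_mul, Complex.ofReal_re]
  linarith

theorem Matrix.PosSemidef.normSq_apply_le {ι : Type*} [Fintype ι] [DecidableEq ι]
    {M : Matrix ι ι ℂ} (hM : M.PosSemidef) (a b : ι) :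
    Complex.normSq (M a b) ≤ (M a a).re * (M b b).re := by
  have h := (hM.submatrix ![a, b]).det_nonneg
  rw [det_fin_two] at h
  simp only [Fin.isValue, submatrix_apply, Matrix.cons_val_zero, Matrix.cons_val_one] at h
  rw [← hM.1.apply b a, Complex.star_def, Complex.mul_conj] at h
  have him : ∀ c, (M c c).im = 0 := fun c => (Complex.nonneg_iff.mp hM.diag_nonneg).2.symm
  simpa [Complex.le_def, him] using (Complex.le_def.mp h).1

theorem IsDensity.norm_apply_le_one {ι : Type*} [Fintype ι] {M : Matrix ι ι ℂ}
    (hM : IsDensity M) (a b : ι) : ‖M a b‖ ≤ 1 := by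
  classical
  have hdiag : ∀ c, 0 ≤ (M c c).re := fun c => (Complex.nonneg_iff.mp hM.1.diag_nonneg).1
  have hdiag_le : ∀ c, (M c c).re ≤ 1 := fun c => by
    have htr : ∑ c, (M c c).re = 1 := by simpa [trace] using congrArg Complex.re hM.2
    exact htr ▸ Finset.single_le_sum (fun c _ => hdiag c) (Finset.mem_univ c)
  have := hM.1.normSq_apply_le a b
  rw [Complex.normSq_eq_norm_sq] at this
  nlinarith [norm_nonneg (M a b), hdiag a, hdiag b, hdiag_le a, hdiag_le b]

theorem Matrix.isClosed_setOf_posSemidef {ι : Type*} [Fintype ι] :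
    IsClosed {M : Matrix ι ι ℂ | M.PosSemidef} := by
  simp only [posSemidef_iff_dotProduct_mulVec, Set.ofPred_and, Set.ofPred_forall]
  exact (isClosed_eq continuous_id.matrix_conjTranspose continuous_id).inter
    (isClosed_iInter fun x => isClosed_le continuous_const
      (continuous_const.dotProduct (continuous_id.matrix_mulVec continuous_const)))

theorem isCompact_setOf_isDensity {ι : Type*} [Fintype ι] :
    IsCompact {M : Matrix ι ι ℂ | IsDensity M} := by
  refine (isCompact_univ_pi fun a => isCompact_univ_pi fun b =>
    isCompact_closedBall (0 : ℂ) 1).of_isClosed_subset ?_ fun M hM a _ b _ => ?_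
  · exact isClosed_setOf_posSemidef.inter (isClosed_eq continuous_id.matrix_trace continuous_const)
  · simpa using hM.norm_apply_le_one a b

theorem convex_setOf_isDensity {ι : Type*} [Fintype ι] :
    Convex ℝ {M : Matrix ι ι ℂ | IsDensity M} := by
  intro M hM M' hM' a b ha hb hab
  refine ⟨(hM.1.smul ha).add (hM'.1.smul hb), ?_⟩
  rw [trace_add, trace_smul, trace_smul, hM.2, hM'.2, ← add_smul, hab, one_smul]

theorem Matrix.dotProduct_mulVec_self_eq_zero_of_transpose_eq_neg {ι : Type*} [Fintype ι]
    {A : Matrix ι ι ℝ} (hA : Aᵀ = -A) (c : ι → ℝ) : c ⬝ᵥ A *ᵥ c = 0 := by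
  have h : c ⬝ᵥ A *ᵥ c = -(c ⬝ᵥ A *ᵥ c) := by
    conv_lhs => rw [dotProduct_mulVec, ← mulVec_transpose, hA, neg_mulVec, neg_dotProduct,
      dotProduct_comm]
  linarith

theorem Matrix.exists_mem_stdSimplex_mulVec_nonpos {ι : Type*} [Fintype ι] [Nonempty ι]
    {A : Matrix ι ι ℝ} (hA : Aᵀ = -A) : ∃ l ∈ stdSimplex ℝ ι, A *ᵥ l ≤ 0 := by
  classical
  by_contra! h
  set K := (fun l => -(A *ᵥ l)) '' stdSimplex ℝ ι
  have hKconv : Convex ℝ K := (convex_stdSimplex ℝ ι).linear_image (-A.mulVecLin)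
  have hKcomp : IsCompact K :=
    (isCompact_stdSimplex ℝ ι).image (continuous_const.matrix_mulVec continuous_id).neg
  have hdisj : Disjoint K (ProperCone.positive ℝ (ι → ℝ)) := by
    rw [Set.disjoint_left]
    rintro _ ⟨l, hl, rfl⟩ hpos
    exact h l hl (neg_nonneg.mp hpos)
  obtain ⟨f, hf_nonneg, hf_neg⟩ := ProperCone.hyperplane_separation _ hKconv hKcomp hdisj
  set c : ι → ℝ := fun i => f (Pi.single i 1)
  have hc : ∀ i, 0 ≤ c i := fun i => hf_nonneg _ (Pi.single_nonneg.mpr zero_le_one)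
  have hf : ∀ x, f x = x ⬝ᵥ c := fun x => by
    conv_lhs => rw [← Finset.univ_sum_single x]
    refine (map_sum f _ _).trans (Finset.sum_congr rfl fun i _ => ?_)
    rw [show Pi.single i (x i) = x i • Pi.single i (1 : ℝ) by
      rw [← Pi.single_smul', smul_eq_mul, mul_one], map_smul, smul_eq_mul]
  have hs : 0 < ∑ i, c i := by
    refine (Finset.sum_nonneg fun i _ => hc i).lt_of_ne fun hs => ?_
    have hc0 : c = 0 := funext fun i =>
      (Finset.sum_eq_zero_iff_of_nonneg fun i _ => hc i).mp hs.symm i (Finset.mem_univ i)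
    obtain ⟨i⟩ := ‹Nonempty ι›
    have := hf_neg _ ⟨_, single_mem_stdSimplex ℝ i, rfl⟩
    rw [hf, hc0, dotProduct_zero] at this
    exact this.false
  -- Normalising `c` gives a strategy `l` with `f (-(A *ᵥ l)) = 0`, since `A` is skew.
  have hl : (∑ i, c i)⁻¹ • c ∈ stdSimplex ℝ ι :=
    ⟨fun i => smul_nonneg (inv_nonneg.mpr hs.le) (hc i), by
      simp only [Pi.smul_apply, smul_eq_mul]; rw [← Finset.mul_sum, inv_mul_cancel₀ hs.ne']⟩
  have := hf_neg _ ⟨_, hl, rfl⟩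
  dsimp only at this
  rw [hf, mulVec_smul, neg_dotProduct, smul_dotProduct, dotProduct_comm,
    dotProduct_mulVec_self_eq_zero_of_transpose_eq_neg hA, smul_zero, neg_zero] at this
  exact this.false

theorem LinearMap.apply_eq_neg_apply_of_apply_self_eq_zero {E : Type*} [AddCommGroup E]
    [Module ℝ E] {C : Set E} (hC : Convex ℝ C) (F : E →ₗ[ℝ] E →ₗ[ℝ] ℝ)
    (hF : ∀ x ∈ C, F x x = 0) {x y : E} (hx : x ∈ C) (hy : y ∈ C) : F x y = -F y x := by
  have hmid := hF _ (hC hx hy (by norm_num : (0 : ℝ) ≤ 1 / 2) (by norm_num : (0 : ℝ) ≤ 1 / 2)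
    (by norm_num))
  simp only [map_add, map_smul, LinearMap.add_apply, LinearMap.smul_apply, hF x hx, hF y hy,
    smul_eq_mul] at hmid
  linarith

theorem exists_forall_apply_nonpos_of_apply_self_eq_zero {E : Type*} [AddCommGroup E]
    [Module ℝ E] [TopologicalSpace E] [IsTopologicalAddGroup E] [ContinuousSMul ℝ E] [T2Space E]
    [FiniteDimensional ℝ E] {C : Set E} (hCcomp : IsCompact C) (hCconv : Convex ℝ C)
    (hCne : C.Nonempty) (F : E →ₗ[ℝ] E →ₗ[ℝ] ℝ) (hF : ∀ x ∈ C, F x x = 0) :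
    ∃ x ∈ C, ∀ y ∈ C, F x y ≤ 0 := by
  by_contra! h
  obtain ⟨t, ht⟩ := hCcomp.elim_finite_subcover (fun y : C => {x | 0 < F x y})
    (fun y => isOpen_lt continuous_const (F.flip y).continuous_of_finiteDimensional)
    (fun x hx => by simpa using h x hx)
  obtain ⟨x₀, hx₀⟩ := hCne
  have : Nonempty t := by
    obtain ⟨y, hy, -⟩ := Set.mem_iUnion₂.mp (ht hx₀)
    exact ⟨⟨y, hy⟩⟩
  set A : Matrix t t ℝ := .of fun j k => F k.1 j.1
  have hA : Aᵀ = -A := by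
    ext j k
    exact LinearMap.apply_eq_neg_apply_of_apply_self_eq_zero hCconv F hF j.1.2 k.1.2
  obtain ⟨l, hl, hAl⟩ := Matrix.exists_mem_stdSimplex_mulVec_nonpos hA
  set x := ∑ k, l k • (k.1 : E)
  have hx : x ∈ C := hCconv.sum_mem (fun k _ => hl.1 k) hl.2 fun k _ => k.1.2
  obtain ⟨y, hy, hxy⟩ := Set.mem_iUnion₂.mp (ht hx)
  have : F x y = (A *ᵥ l) ⟨y, hy⟩ := by
    simp [x, A, Matrix.mulVec, dotProduct, mul_comm]
  exact (hxy.trans_eq this).not_ge (hAl _)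

theorem frob_kronecker_eq_trace_mul_payoffOp {k m : ℕ}
    {R : Matrix (Fin k × Fin m) (Fin k × Fin m) ℂ} (hR : R.IsHermitian)
    (S : Matrix (Fin k) (Fin k) ℂ) (T : Matrix (Fin m) (Fin m) ℂ) :
    frob R (S ⊗ₖ T) = (S * payoffOp R T).trace := by
  rw [frob, hR.eq]
  simp only [trace, diag, mul_apply, kroneckerMap_apply, payoffOp, of_apply,
    Fintype.sum_prod_type, Finset.mul_sum]
  conv_rhs => rw [Finset.sum_comm]
  refine Finset.sum_congr rfl fun a _ => ?_
  conv_rhs => rw [Finset.sum_comm]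
  exact Finset.sum_congr rfl fun c _ => Finset.sum_congr rfl fun b _ =>
    Finset.sum_congr rfl fun d _ => by ring

theorem payoffOp_isHermitian {k m : ℕ} {R : Matrix (Fin k × Fin m) (Fin k × Fin m) ℂ}
    (hR : R.IsHermitian) {T : Matrix (Fin m) (Fin m) ℂ} (hT : T.IsHermitian) :
    (payoffOp R T).IsHermitian := by
  ext a b
  simp only [conjTranspose_apply, payoffOp, of_apply, star_sum, star_mul']
  rw [Finset.sum_comm]
  refine Finset.sum_congr rfl fun c _ => Finset.sum_congr rfl fun d _ => ?_
  rw [hR.apply, hT.apply]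

section Game

variable {N : ℕ} (G : SimpleGraph (Fin N)) [DecidableRel G.Adj] (n : Fin N → ℕ)
  (R : ∀ i j : Fin N, Matrix (Fin (n i) × Fin (n j)) (Fin (n i) × Fin (n j)) ℂ)

def deviationForm :
    (∀ i, Matrix (Fin (n i)) (Fin (n i)) ℂ) →ₗ[ℝ] (∀ i, Matrix (Fin (n i)) (Fin (n i)) ℂ) →ₗ[ℝ] ℝ :=
  LinearMap.mk₂ ℝ (fun X Y => ∑ i, (∑ j ∈ G.neighborFinset i, frob (R i j) (Y i ⊗ₖ X j)).re)
    (fun X X' Y => by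
      simp only [Pi.add_apply, kronecker_add, frob, mul_add, trace_add, Finset.sum_add_distrib,
        Complex.add_re])
    (fun c X Y => by
      simp only [Pi.smul_apply, kronecker_smul, frob, mul_smul_comm, trace_smul,
        ← Finset.smul_sum, Complex.smul_re, smul_eq_mul, Finset.mul_sum])
    (fun X Y Y' => by
      simp only [Pi.add_apply, add_kronecker, frob, mul_add, trace_add, Finset.sum_add_distrib,
        Complex.add_re])
    (fun c X Y => by
      simp only [Pi.smul_apply, smul_kronecker, frob, mul_smul_comm, trace_smul,
        ← Finset.smul_sum, Complex.smul_re, smul_eq_mul, Finset.mul_sum])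

variable {G n R}

theorem deviationForm_apply (X Y : ∀ i, Matrix (Fin (n i)) (Fin (n i)) ℂ) :
    deviationForm G n R X Y = ∑ i, payoff G n R (Function.update X i (Y i)) i := by
  change ∑ i, (∑ j ∈ G.neighborFinset i, frob (R i j) (Y i ⊗ₖ X j)).re = _
  refine Finset.sum_congr rfl fun i _ => congrArg Complex.re <|
    Finset.sum_congr rfl fun j hj => ?_
  have hji : j ≠ i := (G.ne_of_adj ((G.mem_neighborFinset i j).mp hj)).symm
  rw [Function.update_self, Function.update_of_ne hji]

theorem deviationForm_self (X : ∀ i, Matrix (Fin (n i)) (Fin (n i)) ℂ) :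
    deviationForm G n R X X = ∑ i, payoff G n R X i := by
  simp [deviationForm_apply]

theorem isNash_iff_forall_deviationForm_le {X : ∀ i, Matrix (Fin (n i)) (Fin (n i)) ℂ}
    (hX : ∀ i, IsDensity (X i)) :
    IsNash G n R X ↔ ∀ Y : ∀ i, Matrix (Fin (n i)) (Fin (n i)) ℂ, (∀ i, IsDensity (Y i)) →
      deviationForm G n R X Y ≤ deviationForm G n R X X := by
  refine ⟨fun h Y hY => ?_, fun h i S hS => ?_⟩
  · rw [deviationForm_apply, deviationForm_self]
    exact Finset.sum_le_sum fun i _ => h i (Y i) (hY i)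
  · have hY : ∀ j, IsDensity (Function.update X i S j) := by
      intro j
      rcases eq_or_ne j i with rfl | hji
      · simpa using hS
      · simpa [Function.update_of_ne hji] using hX j
    have := h _ hY
    rw [deviationForm_apply, deviationForm_self, ← sub_nonpos, ← Finset.sum_sub_distrib,
      Finset.sum_eq_single i] at this
    · simpa using this
    · intro j _ hji
      simp [Function.update_of_ne hji]
    · simp

theorem exists_isNash
    (hzs : ∀ X : ∀ i, Matrix (Fin (n i)) (Fin (n i)) ℂ,
      (∀ i, IsDensity (X i)) → ∑ i, payoff G n R X i = 0)
    (hne : ∃ X : ∀ i, Matrix (Fin (n i)) (Fin (n i)) ℂ, ∀ i, IsDensity (X i)) :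
    ∃ X : ∀ i, Matrix (Fin (n i)) (Fin (n i)) ℂ, (∀ i, IsDensity (X i)) ∧ IsNash G n R X := by
  set C := {X : ∀ i, Matrix (Fin (n i)) (Fin (n i)) ℂ | ∀ i, IsDensity (X i)}
  have hC : C = Set.univ.pi fun i => {M | IsDensity M} := by
    ext
    simp [C]
  have hF : ∀ X : ∀ i, Matrix (Fin (n i)) (Fin (n i)) ℂ, (∀ i, IsDensity (X i)) →
      deviationForm G n R X X = 0 := fun X hX => (deviationForm_self X).trans (hzs X hX)
  obtain ⟨X, hX, hXY⟩ := exists_forall_apply_nonpos_of_apply_self_eq_zero (C := C)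
    (by rw [hC]; exact isCompact_univ_pi fun i => isCompact_setOf_isDensity)
    (by rw [hC]; exact convex_pi fun i _ => convex_setOf_isDensity) hne (deviationForm G n R) hF
  refine ⟨X, hX, (isNash_iff_forall_deviationForm_le hX).mpr fun Y hY => ?_⟩
  exact (hXY Y hY).trans_eq (hF X hX).symm

theorem payoff_update_eq_re_trace_mul_Phi (hR : ∀ i j, G.Adj i j → (R i j).IsHermitian)
    (X : ∀ i, Matrix (Fin (n i)) (Fin (n i)) ℂ) (i : Fin N)
    (S : Matrix (Fin (n i)) (Fin (n i)) ℂ) :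
    payoff G n R (Function.update X i S) i = (S * Phi G n R X i).trace.re := by
  rw [payoff, Phi, Finset.mul_sum, trace_sum]
  refine congrArg Complex.re <| Finset.sum_congr rfl fun j hj => ?_
  have hij := (G.mem_neighborFinset i j).mp hj
  rw [Function.update_self, Function.update_of_ne hij.ne',
    frob_kronecker_eq_trace_mul_payoffOp (hR i j hij)]

theorem Phi_isHermitian (hR : ∀ i j, G.Adj i j → (R i j).IsHermitian)
    {X : ∀ i, Matrix (Fin (n i)) (Fin (n i)) ℂ} (hX : ∀ i, (X i).IsHermitian) (i : Fin N) :
    (Phi G n R X i).IsHermitian :=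
  isSelfAdjoint_sum _ fun j hj =>
    payoffOp_isHermitian (hR i j ((G.mem_neighborFinset i j).mp hj)) (hX j)

theorem posSemidef_smul_one_sub_Phi_iff (hR : ∀ i j, G.Adj i j → (R i j).IsHermitian)
    {X : ∀ i, Matrix (Fin (n i)) (Fin (n i)) ℂ} (hX : ∀ i, IsDensity (X i)) (i : Fin N) (w : ℝ) :
    ((w : ℂ) • (1 : Matrix (Fin (n i)) (Fin (n i)) ℂ) - Phi G n R X i).PosSemidef ↔
      ∀ S, IsDensity S → payoff G n R (Function.update X i S) i ≤ w := by
  simp only [payoff_update_eq_re_trace_mul_Phi hR]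
  exact posSemidef_smul_one_sub_iff_forall_isDensity (Phi_isHermitian hR (fun j => (hX j).1.1) i)

theorem payoff_le_of_posSemidef_smul_one_sub_Phi (hR : ∀ i j, G.Adj i j → (R i j).IsHermitian)
    {X : ∀ i, Matrix (Fin (n i)) (Fin (n i)) ℂ} (hX : ∀ i, IsDensity (X i)) {i : Fin N} {w : ℝ}
    (hw : ((w : ℂ) • (1 : Matrix (Fin (n i)) (Fin (n i)) ℂ) - Phi G n R X i).PosSemidef) :
    payoff G n R X i ≤ w := by
  simpa using (posSemidef_smul_one_sub_Phi_iff hR hX i w).mp hw (X i) (hX i)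

theorem sum_nonneg_of_posSemidef_smul_one_sub_Phi (hR : ∀ i j, G.Adj i j → (R i j).IsHermitian)
    (hzs : ∀ X : ∀ i, Matrix (Fin (n i)) (Fin (n i)) ℂ,
      (∀ i, IsDensity (X i)) → ∑ i, payoff G n R X i = 0)
    {X : ∀ i, Matrix (Fin (n i)) (Fin (n i)) ℂ} (hX : ∀ i, IsDensity (X i)) {w : Fin N → ℝ}
    (hw : ∀ i, ((w i : ℂ) • (1 : Matrix (Fin (n i)) (Fin (n i)) ℂ) - Phi G n R X i).PosSemidef) :
    0 ≤ ∑ i, w i :=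
  hzs X hX ▸ Finset.sum_le_sum fun i _ => payoff_le_of_posSemidef_smul_one_sub_Phi hR hX (hw i)

theorem isNash_iff_exists_posSemidef_smul_one_sub_Phi
    (hR : ∀ i j, G.Adj i j → (R i j).IsHermitian)
    (hzs : ∀ X : ∀ i, Matrix (Fin (n i)) (Fin (n i)) ℂ,
      (∀ i, IsDensity (X i)) → ∑ i, payoff G n R X i = 0)
    {X : ∀ i, Matrix (Fin (n i)) (Fin (n i)) ℂ} (hX : ∀ i, IsDensity (X i)) :
    IsNash G n R X ↔ ∃ w : Fin N → ℝ,
      (∀ i, ((w i : ℂ) • (1 : Matrix (Fin (n i)) (Fin (n i)) ℂ) - Phi G n R X i).PosSemidef) ∧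
        ∑ i, w i = 0 := by
  refine ⟨fun h => ⟨fun i => payoff G n R X i,
    fun i => (posSemidef_smul_one_sub_Phi_iff hR hX i _).mpr (h i), hzs X hX⟩, ?_⟩
  rintro ⟨w, hw, hsum⟩ i S hS
  have hle : ∀ i ∈ Finset.univ, payoff G n R X i ≤ w i := fun i _ =>
    payoff_le_of_posSemidef_smul_one_sub_Phi hR hX (hw i)
  have heq := (Finset.sum_eq_sum_iff_of_le hle).mp (by rw [hzs X hX, hsum]) i (Finset.mem_univ i)
  exact heq ▸ (posSemidef_smul_one_sub_Phi_iff hR hX i _).mp (hw i) S hS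

end Game

theorem stmt12_general {N : ℕ} (G : SimpleGraph (Fin N)) [DecidableRel G.Adj] (n : Fin N → ℕ)
    (R : ∀ i j : Fin N, Matrix (Fin (n i) × Fin (n j)) (Fin (n i) × Fin (n j)) ℂ)
    (hR : ∀ i j, G.Adj i j → (R i j).IsHermitian)
    (hzs : ∀ X : ∀ i, Matrix (Fin (n i)) (Fin (n i)) ℂ,
      (∀ i, IsDensity (X i)) → ∑ i, payoff G n R X i = 0) :
    (∀ X : ∀ i, Matrix (Fin (n i)) (Fin (n i)) ℂ, (∀ i, IsDensity (X i)) →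
      (IsNash G n R X ↔ ∃ w : Fin N → ℝ,
        (∀ i, ((w i : ℂ) • (1 : Matrix (Fin (n i)) (Fin (n i)) ℂ)
          - Phi G n R X i).PosSemidef) ∧ ∑ i, w i = 0)) ∧
    {X : ∀ i, Matrix (Fin (n i)) (Fin (n i)) ℂ | (∀ i, IsDensity (X i)) ∧ IsNash G n R X} =
      {X : ∀ i, Matrix (Fin (n i)) (Fin (n i)) ℂ | ∃ w : Fin N → ℝ,
        ((∀ i, IsDensity (X i)) ∧
          ∀ i, ((w i : ℂ) • (1 : Matrix (Fin (n i)) (Fin (n i)) ℂ)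
            - Phi G n R X i).PosSemidef) ∧
        (∀ (w' : Fin N → ℝ) (X' : ∀ i, Matrix (Fin (n i)) (Fin (n i)) ℂ),
          ((∀ i, IsDensity (X' i)) ∧
            ∀ i, ((w' i : ℂ) • (1 : Matrix (Fin (n i)) (Fin (n i)) ℂ)
              - Phi G n R X' i).PosSemidef) →
          ∑ i, w i ≤ ∑ i, w' i)} := by
  have hNash := fun (X : ∀ i, Matrix (Fin (n i)) (Fin (n i)) ℂ) (hX : ∀ i, IsDensity (X i)) =>
    isNash_iff_exists_posSemidef_smul_one_sub_Phi hR hzs hX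
  refine ⟨hNash, Set.ext fun X => ⟨?_, ?_⟩⟩
  · rintro ⟨hX, hXNash⟩
    obtain ⟨w, hw, hsum⟩ := (hNash X hX).mp hXNash
    exact ⟨w, ⟨hX, hw⟩, fun w' X' ⟨hX', hw'⟩ =>
      hsum ▸ sum_nonneg_of_posSemidef_smul_one_sub_Phi hR hzs hX' hw'⟩
  · rintro ⟨w, ⟨hX, hw⟩, hopt⟩
    obtain ⟨X₀, hX₀, hX₀Nash⟩ := exists_isNash hzs ⟨X, hX⟩
    obtain ⟨w₀, hw₀, hsum₀⟩ := (hNash X₀ hX₀).mp hX₀Nash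
    have hsum : ∑ i, w i = 0 := le_antisymm (hsum₀ ▸ hopt w₀ X₀ ⟨hX₀, hw₀⟩)
      (sum_nonneg_of_posSemidef_smul_one_sub_Phi hR hzs hX hw)
    exact ⟨hX, (hNash X hX).mpr ⟨w, hw, hsum⟩⟩

/-- in a zero-sum semidefinite network game, a profile of density matrices `X`
is a Nash equilibrium iff there is `w ∈ ℝ^N` with `Φ_i(X) ⪯ w_i I` for all `i` and
`Σ_i w_i = 0`; consequently the set of Nash equilibria is the projection onto the
`X`-coordinates of the set of optimal solutions of the SDP minimizing `Σ_i w_i` subject to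
`Φ_i(X) ⪯ w_i I` with `X` a profile of density matrices. -/
theorem stmt12 {N : ℕ} (G : SimpleGraph (Fin N)) [DecidableRel G.Adj] (n : Fin N → ℕ)
    (hn : ∀ i, 0 < n i)
    (R : ∀ i j : Fin N, Matrix (Fin (n i) × Fin (n j)) (Fin (n i) × Fin (n j)) ℂ)
    (hR : ∀ i j, G.Adj i j → (R i j).IsHermitian)
    (hzs : ∀ X : ∀ i, Matrix (Fin (n i)) (Fin (n i)) ℂ,
      (∀ i, IsDensity (X i)) → ∑ i, payoff G n R X i = 0) :
    (∀ X : ∀ i, Matrix (Fin (n i)) (Fin (n i)) ℂ, (∀ i, IsDensity (X i)) →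
      (IsNash G n R X ↔ ∃ w : Fin N → ℝ,
        (∀ i, ((w i : ℂ) • (1 : Matrix (Fin (n i)) (Fin (n i)) ℂ)
          - Phi G n R X i).PosSemidef) ∧ ∑ i, w i = 0)) ∧
    {X : ∀ i, Matrix (Fin (n i)) (Fin (n i)) ℂ | (∀ i, IsDensity (X i)) ∧ IsNash G n R X} =
      {X : ∀ i, Matrix (Fin (n i)) (Fin (n i)) ℂ | ∃ w : Fin N → ℝ,
        ((∀ i, IsDensity (X i)) ∧
          ∀ i, ((w i : ℂ) • (1 : Matrix (Fin (n i)) (Fin (n i)) ℂ)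
            - Phi G n R X i).PosSemidef) ∧
        (∀ (w' : Fin N → ℝ) (X' : ∀ i, Matrix (Fin (n i)) (Fin (n i)) ℂ),
          ((∀ i, IsDensity (X' i)) ∧
            ∀ i, ((w' i : ℂ) • (1 : Matrix (Fin (n i)) (Fin (n i)) ℂ)
              - Phi G n R X' i).PosSemidef) →
          ∑ i, w i ≤ ∑ i, w' i)} :=
  stmt12_general G n R hR hzs
end
end

section
/- Consider a semidefinite network game with payoff operators Φ_{ij}, and for a profile X of density matrices let W(X) = Σ_{j=1}^N p_j(X). Then for every player i ∈ [N], all Hermitian matrices X_i, Y_i ∈ M_{n_i}(ℂ), and every profile X of density matrices, one has W(X_i, X_{-i}) − W(Y_i, X_{-i}) = Σ_{ℓ ∈ N(i)} ⟨X_ℓ, (Φ_{iℓ}† + Φ_{ℓi})(X_i − Y_i)⟩, where Φ_{iℓ}† is the adjoint of Φ_{iℓ} with respect to the Frobenius inner product and (X_i, X_{-i}) denotes the profile X with its i-th component replaced by X_i. -/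
open Matrix Kronecker BigOperators ComplexOrder

noncomputable section

/-! Only the summands of `W` that involve player `i` change, namely `⟨R_{iℓ}, X_i ⊗ X_ℓ⟩` and
`⟨R_{ℓi}, X_ℓ ⊗ X_i⟩` for `ℓ ∈ N(i)`. Both are linear in `X_i`, so their differences are the same
expressions evaluated at `X_i − Y_i`; the identity `⟨R, S ⊗ T⟩ = ⟨S, Φ(T)⟩` for Hermitian `R, S`,
followed by the adjoint relation, rewrites them as `⟨X_ℓ, Φ_{iℓ}†(X_i − Y_i)⟩` (up to complex
conjugation, invisible in the real part) and `⟨X_ℓ, Φ_{ℓi}(X_i − Y_i)⟩`. -/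

theorem Matrix.sub_kronecker {l m n p α : Type*} [NonUnitalNonAssocRing α] (A₁ A₂ : Matrix l m α)
    (B : Matrix n p α) : (A₁ - A₂) ⊗ₖ B = A₁ ⊗ₖ B - A₂ ⊗ₖ B := by
  ext ⟨_, _⟩ ⟨_, _⟩
  simp [sub_mul]

theorem Matrix.kronecker_sub {l m n p α : Type*} [NonUnitalNonAssocRing α] (A : Matrix l m α)
    (B₁ B₂ : Matrix n p α) : A ⊗ₖ (B₁ - B₂) = A ⊗ₖ B₁ - A ⊗ₖ B₂ := by
  ext ⟨_, _⟩ ⟨_, _⟩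
  simp [mul_sub]

section Frobenius

variable {α : Type*} [Fintype α]

theorem frob_add_right (A B C : Matrix α α ℂ) : frob A (B + C) = frob A B + frob A C := by
  simp only [frob, Matrix.mul_add, Matrix.trace_add]

theorem frob_sub_right (A B C : Matrix α α ℂ) : frob A (B - C) = frob A B - frob A C := by
  simp only [frob, Matrix.mul_sub, Matrix.trace_sub]

theorem star_frob (A B : Matrix α α ℂ) : star (frob A B) = frob B A := by
  rw [frob, frob, ← Matrix.trace_conjTranspose, Matrix.conjTranspose_mul,
    Matrix.conjTranspose_conjTranspose]

theorem re_frob_comm (A B : Matrix α α ℂ) : (frob A B).re = (frob B A).re := by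
  rw [← star_frob B A, Complex.star_def, Complex.conj_re]

end Frobenius

theorem frob_kronecker_eq_frob_payoffOp {k m : ℕ}
    {R : Matrix (Fin k × Fin m) (Fin k × Fin m) ℂ} (hR : R.IsHermitian)
    {S : Matrix (Fin k) (Fin k) ℂ} (hS : S.IsHermitian) (T : Matrix (Fin m) (Fin m) ℂ) :
    frob R (S ⊗ₖ T) = frob S (payoffOp R T) := by
  have hR' : ∀ p q, star (R q p) = R p q := fun p q => by
    simpa using congrFun (congrFun hR p) q
  have hS' : ∀ a b, star (S b a) = S a b := fun a b => by
    simpa using congrFun (congrFun hS a) b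
  simp only [frob, payoffOp, Matrix.trace, Matrix.diag, Matrix.mul_apply,
    Matrix.conjTranspose_apply, Matrix.kronecker_apply, Matrix.of_apply,
    Fintype.sum_prod_type, Finset.mul_sum, hR', hS']
  conv_rhs => rw [Finset.sum_comm]
  refine Finset.sum_congr rfl fun a _ => ?_
  rw [Finset.sum_comm]
  exact Finset.sum_congr rfl fun b _ => Finset.sum_congr rfl fun c _ =>
    Finset.sum_congr rfl fun d _ => by ring

theorem SimpleGraph.sum_sum_neighborFinset_update_sub {V β : Type*} [Fintype V]
    [DecidableEq V] [AddCommGroup β] (G : SimpleGraph V) [DecidableRel G.Adj] {M : V → Type*}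
    (g : ∀ j k, M j → M k → β) (X : ∀ j, M j) (i : V) (x y : M i) :
    (∑ j, ∑ k ∈ G.neighborFinset j,
        g j k (Function.update X i x j) (Function.update X i x k))
      - (∑ j, ∑ k ∈ G.neighborFinset j,
        g j k (Function.update X i y j) (Function.update X i y k))
      = ∑ l ∈ G.neighborFinset i,
          ((g i l x (X l) - g i l y (X l)) + (g l i (X l) x - g l i (X l) y)) := by
  have key : ∀ j, ∑ k ∈ G.neighborFinset j,
      (g j k (Function.update X i x j) (Function.update X i x k)
        - g j k (Function.update X i y j) (Function.update X i y k))
      = (if j = i then ∑ l ∈ G.neighborFinset i, (g i l x (X l) - g i l y (X l)) else 0)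
        + (if j ∈ G.neighborFinset i then g j i (X j) x - g j i (X j) y else 0) := by
    intro j
    rcases eq_or_ne j i with rfl | hji
    · rw [if_pos rfl, if_neg (G.notMem_neighborFinset_self j), add_zero]
      refine Finset.sum_congr rfl fun l hl => ?_
      have hlj : l ≠ j := (G.ne_of_adj ((G.mem_neighborFinset _ _).1 hl)).symm
      simp only [Function.update_self, Function.update_of_ne hlj]
    · have hmem : i ∈ G.neighborFinset j ↔ j ∈ G.neighborFinset i := by
        simp only [SimpleGraph.mem_neighborFinset, G.adj_comm]
      have hoff : ∀ k ∈ G.neighborFinset j, k ≠ i →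
          g j k (Function.update X i x j) (Function.update X i x k)
            - g j k (Function.update X i y j) (Function.update X i y k) = 0 := by
        intro k _ hki
        simp only [Function.update_of_ne hki, Function.update_of_ne hji, sub_self]
      rw [if_neg hji, zero_add]
      split_ifs with hij
      · rw [Finset.sum_eq_single_of_mem i (hmem.2 hij) hoff]
        simp only [Function.update_self, Function.update_of_ne hji]
      · exact Finset.sum_eq_zero fun k hk =>
          hoff k hk (ne_of_mem_of_not_mem hk (mt hmem.1 hij))
  simp only [← Finset.sum_sub_distrib, key, Finset.sum_add_distrib, Finset.sum_ite_eq',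
    Finset.mem_univ, if_true, Finset.sum_ite_mem, Finset.univ_inter]

theorem stmt13_general {N : ℕ} (G : SimpleGraph (Fin N)) [DecidableRel G.Adj] (n : Fin N → ℕ)
    (R : ∀ i j : Fin N, Matrix (Fin (n i) × Fin (n j)) (Fin (n i) × Fin (n j)) ℂ)
    (hR : ∀ i j, G.Adj i j → (R i j).IsHermitian)
    (A : ∀ i j : Fin N,
      Matrix (Fin (n i)) (Fin (n i)) ℂ →ₗ[ℂ] Matrix (Fin (n j)) (Fin (n j)) ℂ)
    (hA : ∀ (i j : Fin N) (S : Matrix (Fin (n i)) (Fin (n i)) ℂ)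
      (T : Matrix (Fin (n j)) (Fin (n j)) ℂ), frob (A i j S) T = frob S (payoffOp (R i j) T)) :
    ∀ (i : Fin N) (Xi Yi : Matrix (Fin (n i)) (Fin (n i)) ℂ),
      Xi.IsHermitian → Yi.IsHermitian →
      ∀ X : ∀ j, Matrix (Fin (n j)) (Fin (n j)) ℂ, (∀ j, IsDensity (X j)) →
        (∑ j, payoff G n R (Function.update X i Xi) j)
          - (∑ j, payoff G n R (Function.update X i Yi) j)
        = (∑ l ∈ G.neighborFinset i,
            frob (X l) (A i l (Xi - Yi) + payoffOp (R l i) (Xi - Yi))).re := by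
  intro i Xi Yi hXi hYi X hX
  have welfare_eq : ∀ Y : ∀ j, Matrix (Fin (n j)) (Fin (n j)) ℂ, ∑ j, payoff G n R Y j
      = (∑ j, ∑ k ∈ G.neighborFinset j, frob (R j k) (Y j ⊗ₖ Y k)).re := fun Y => by
    simp only [payoff, Complex.re_sum]
  rw [welfare_eq, welfare_eq, ← Complex.sub_re,
    G.sum_sum_neighborFinset_update_sub (fun j k S T => frob (R j k) (S ⊗ₖ T)),
    Complex.re_sum, Complex.re_sum]
  refine Finset.sum_congr rfl fun l hl => ?_
  have hil : G.Adj i l := (G.mem_neighborFinset i l).1 hl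
  rw [← frob_sub_right, ← frob_sub_right, ← Matrix.sub_kronecker, ← Matrix.kronecker_sub,
    frob_kronecker_eq_frob_payoffOp (hR i l hil) (hXi.sub hYi),
    frob_kronecker_eq_frob_payoffOp (hR l i hil.symm) (hX l).1.1,
    ← hA, frob_add_right, Complex.add_re, Complex.add_re, re_frob_comm]

/-- with `W(X) = Σ_j p_j(X)`, for every player `i`, Hermitian `X_i, Y_i` and
profile of density matrices `X`,
`W(X_i, X_{-i}) − W(Y_i, X_{-i}) = Σ_{ℓ ∈ N(i)} ⟨X_ℓ, (Φ_{iℓ}† + Φ_{ℓi})(X_i − Y_i)⟩`.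
Here `A i ℓ` denotes the Frobenius adjoint `Φ_{iℓ}†` of the payoff operator `Φ_{iℓ}`. -/
theorem stmt13 {N : ℕ} (G : SimpleGraph (Fin N)) [DecidableRel G.Adj] (n : Fin N → ℕ)
    (hn : ∀ i, 0 < n i)
    (R : ∀ i j : Fin N, Matrix (Fin (n i) × Fin (n j)) (Fin (n i) × Fin (n j)) ℂ)
    (hR : ∀ i j, G.Adj i j → (R i j).IsHermitian)
    (A : ∀ i j : Fin N,
      Matrix (Fin (n i)) (Fin (n i)) ℂ →ₗ[ℂ] Matrix (Fin (n j)) (Fin (n j)) ℂ)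
    (hA : ∀ (i j : Fin N) (S : Matrix (Fin (n i)) (Fin (n i)) ℂ)
      (T : Matrix (Fin (n j)) (Fin (n j)) ℂ), frob (A i j S) T = frob S (payoffOp (R i j) T)) :
    ∀ (i : Fin N) (Xi Yi : Matrix (Fin (n i)) (Fin (n i)) ℂ),
      Xi.IsHermitian → Yi.IsHermitian →
      ∀ X : ∀ j, Matrix (Fin (n j)) (Fin (n j)) ℂ, (∀ j, IsDensity (X j)) →
        (∑ j, payoff G n R (Function.update X i Xi) j)
          - (∑ j, payoff G n R (Function.update X i Yi) j)
        = (∑ l ∈ G.neighborFinset i,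
            frob (X l) (A i l (Xi - Yi) + payoffOp (R l i) (Xi - Yi))).re :=
  stmt13_general G n R hR A hA

end
end
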